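/- Let c_1, ..., c_n be i.i.d. real random variables with positive variance, and let y_n = (((1/n) Σ_{i=1}^n c_i)² − μ²)/(B_2 − μ²) where μ = E[c], B_2 = E[c²]. Then y_n − 1/n converges to 0 in L² (equivalently, E[(y_n − 1/n)²] → 0 as n → ∞). -/

import Mathlib

open MeasureTheory ProbabilityTheory Finset Filter
open scoped ENNReal

open scoped NNReal in
lemma key_tendsto {Ω : Type*} [MeasurableSpace Ω] {P : Measure Ω} {Z : ℕ → Ω → ℝ}
    (hm : ∀ n, AEStronglyMeasurable (Z n) P) {k : ℕ} (hk : k ≠ 0)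
    (h : Tendsto (fun n => eLpNorm (Z n) ((2 * k : ℕ) : ℝ≥0∞) P) atTop (nhds 0)) :
    Tendsto (fun n => ∫ ω, (Z n ω) ^ (2 * k) ∂P) atTop (nhds 0) := by
  have heq : ∀ n, ∫ ω, (Z n ω) ^ (2 * k) ∂P
      = ((eLpNorm (Z n) ((2 * k : ℕ) : ℝ≥0∞) P) ^ (2 * k)).toReal := by
    intro n
    rw [integral_eq_lintegral_of_nonneg_ae
      (Filter.Eventually.of_forall fun ω => (even_two_mul k).pow_nonneg _)
      ((hm n).pow _)]
    congr 1
    have hpt : ∀ ω, ENNReal.ofReal (Z n ω ^ (2 * k))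
        = ‖Z n ω‖ₑ ^ (((2 * k : ℝ≥0) : ℝ)) := by
      intro ω
      have h1 : Z n ω ^ (2 * k) = |Z n ω| ^ (2 * k) := by
        rw [← abs_pow, abs_of_nonneg ((even_two_mul k).pow_nonneg _)]
      rw [h1, ENNReal.ofReal_pow (abs_nonneg _), ← Real.enorm_eq_ofReal_abs]
      rw [show (((2 * k : ℝ≥0) : ℝ)) = ((2 * k : ℕ) : ℝ) by push_cast; ring,
        ENNReal.rpow_natCast]
    have hlint : ∫⁻ ω, ENNReal.ofReal (Z n ω ^ (2 * k)) ∂P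
        = ∫⁻ ω, ‖Z n ω‖ₑ ^ (((2 * k : ℝ≥0) : ℝ)) ∂P :=
      lintegral_congr hpt
    rw [hlint, ← eLpNorm_nnreal_pow_eq_lintegral
      (f := Z n) (p := (2 * k : ℝ≥0)) (by positivity)]
    rw [show (((2 * k : ℝ≥0)) : ℝ≥0∞) = ((2 * k : ℕ) : ℝ≥0∞) by push_cast; ring,
      show (((2 * k : ℝ≥0) : ℝ)) = ((2 * k : ℕ) : ℝ) by push_cast; ring,
      ENNReal.rpow_natCast]
  have h2 : Tendsto
      (fun n => ((eLpNorm (Z n) ((2 * k : ℕ) : ℝ≥0∞) P) ^ (2 * k)).toReal)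
      atTop (nhds 0) := by
    have hp := ENNReal.Tendsto.pow (n := 2 * k) h
    rw [zero_pow (by omega)] at hp
    have := (ENNReal.tendsto_toReal (a := 0) (by simp)).comp hp
    exact this
  simpa only [heq] using h2

/-- For an infinite i.i.d. sequence with finite fourth moment and positive variance,
the statistic `y_n = (((1/n) ∑_{i<n} cᵢ)² − μ²)/(B₂ − μ²)` satisfies
`y_n − 1/n → 0` in `L²`, i.e. `E[(y_n − 1/n)²] → 0`. -/
theorem estimator_L2_consistency
    {Ω : Type*} [MeasurableSpace Ω] (P : Measure Ω) [IsProbabilityMeasure P]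
    (c : ℕ → Ω → ℝ)
    (hmeas : ∀ i, Measurable (c i))
    (hindep : iIndepFun c P)
    (hident : ∀ i, IdentDistrib (c i) (c 0) P P)
    (hL4 : MemLp (c 0) 4 P)
    (μ B2 : ℝ) (hμ : μ = ∫ ω, c 0 ω ∂P) (hB2 : B2 = ∫ ω, (c 0 ω) ^ 2 ∂P)
    (hvar : μ ^ 2 < B2) :
    Tendsto (fun n : ℕ =>
        ∫ ω, ((((∑ i ∈ Finset.range n, c i ω) / n) ^ 2 - μ ^ 2) / (B2 - μ ^ 2)
          - 1 / n) ^ 2 ∂P)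
      atTop (nhds 0) := by
  set σ2 : ℝ := B2 - μ ^ 2 with hσ2def
  have hσ2 : 0 < σ2 := sub_pos.mpr hvar
  set Z : ℕ → Ω → ℝ := fun n ω => (n : ℝ)⁻¹ • (∑ i ∈ Finset.range n, c i ω) - μ
    with hZdef
  have hmeasZ : ∀ n, Measurable (Z n) := fun n =>
    ((Finset.measurable_sum _ fun i _ => hmeas i).const_smul ((n:ℝ)⁻¹)).sub
      measurable_const
  have hpair : Pairwise (Function.onFun (IndepFun · · P) c) := fun i j hij => hindep.indepFun hij
  have hmemc : ∀ i, MemLp (c i) 4 P := fun i => (hident i).symm.memLp_snd hL4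
  have hL2 : MemLp (c 0) 2 P := hL4.mono_exponent (by norm_num)
  have hS : ∀ n, MemLp (fun ω => ∑ i ∈ Finset.range n, c i ω) 4 P := by
    intro n
    have := memLp_finset_sum' (μ := P) (Finset.range n) fun i _ => hmemc i
    have heq : (∑ i ∈ Finset.range n, c i) = fun ω => ∑ i ∈ Finset.range n, c i ω := by
      funext ω; simp
    rwa [heq] at this
  have hZ4 : ∀ n, MemLp (Z n) 4 P := fun n =>
    ((hS n).const_smul ((n:ℝ)⁻¹)).sub (memLp_const μ)
  have hZ2 : ∀ n, MemLp (Z n) 2 P := fun n =>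
    (hZ4 n).mono_exponent (by norm_num)
  -- squares
  have hZsq : ∀ n, MemLp (fun ω => (Z n ω) ^ 2) 2 P := by
    intro n
    have := (hZ4 n).smul (φ := Z n) (hZ4 n) (p := 4) (q := 4) (r := 2) (hpqr := ⟨by
        rw [← two_mul, show (4:ℝ≥0∞) = 2 * 2 by norm_num, ENNReal.mul_inv (by simp) (by simp),
          ← mul_assoc, ENNReal.mul_inv_cancel (by simp) (by simp), one_mul]⟩)
    have heq : (Z n • Z n) = fun ω => (Z n ω) ^ 2 := by
      funext ω; simp [Pi.smul_apply', smul_eq_mul, pow_two]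
    rwa [heq] at this
  have int_Z4 : ∀ n, Integrable (fun ω => (Z n ω) ^ 4) P := by
    intro n
    have := (hZsq n).smul (φ := fun ω => (Z n ω) ^ 2) (hZsq n)
      (p := 2) (q := 2) (r := 1) (hpqr := ⟨by rw [ENNReal.inv_two_add_inv_two, inv_one]⟩)
    have heq : ((fun ω => (Z n ω) ^ 2) • (fun ω => (Z n ω) ^ 2))
        = fun ω => (Z n ω) ^ 4 := by
      funext ω; simp [Pi.smul_apply', smul_eq_mul]; ring
    rw [heq] at this
    exact memLp_one_iff_integrable.mp this
  have int_Z2 : ∀ n, Integrable (fun ω => (Z n ω) ^ 2) P := fun n =>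
    (hZsq n).integrable (by norm_num)
  have int_Z : ∀ n, Integrable (Z n) P := fun n => (hZ2 n).integrable (by norm_num)
  -- L^p convergence from the strong law
  have h4 : Tendsto (fun n => eLpNorm (Z n) (((2 * 2 : ℕ)) : ℝ≥0∞) P) atTop (nhds 0) := by
    have := strong_law_Lp (p := 4) (by norm_num) (by norm_num) c hL4 hpair hident
    rw [← hμ] at this
    convert this using 3 <;> norm_num
  have h2 : Tendsto (fun n => eLpNorm (Z n) (((2 * 1 : ℕ)) : ℝ≥0∞) P) atTop (nhds 0) := by
    have := strong_law_Lp (p := 2) (by norm_num) (by norm_num) c hL2 hpair hident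
    rw [← hμ] at this
    convert this using 3 <;> norm_num
  have hA : Tendsto (fun n => ∫ ω, (Z n ω) ^ (2 * 2) ∂P) atTop (nhds 0) :=
    key_tendsto (fun n => (hmeasZ n).aestronglyMeasurable) (by norm_num) h4
  have hB : Tendsto (fun n => ∫ ω, (Z n ω) ^ (2 * 1) ∂P) atTop (nhds 0) :=
    key_tendsto (fun n => (hmeasZ n).aestronglyMeasurable) (by norm_num) h2
  norm_num at hA hB
  -- rewrite the integrand
  have key_eq : (fun n : ℕ =>
      ∫ ω, ((((∑ i ∈ Finset.range n, c i ω) / n) ^ 2 - μ ^ 2) / (B2 - μ ^ 2)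
          - 1 / n) ^ 2 ∂P)
      = fun n : ℕ =>
        ∫ ω, ((Z n ω) ^ 2 + 2 * μ * Z n ω - σ2 * (1 / n)) ^ 2 / σ2 ^ 2 ∂P := by
    funext n
    apply integral_congr_ae
    filter_upwards with ω
    have hz : (∑ i ∈ Finset.range n, c i ω) / (n : ℝ) = Z n ω + μ := by
      simp [hZdef, smul_eq_mul, div_eq_inv_mul]
    have hid : ∀ z t : ℝ,
        (((z + μ) ^ 2 - μ ^ 2) / σ2 - t) ^ 2 = (z ^ 2 + 2 * μ * z - σ2 * t) ^ 2 / σ2 ^ 2 := by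
      intro z t
      field_simp
      ring
    rw [← hσ2def, hz, hid (Z n ω) (1 / n)]
  -- integrability of the rewritten integrand
  have hh : ∀ n : ℕ, MemLp (fun ω => (Z n ω) ^ 2 + 2 * μ * Z n ω - σ2 * (1 / (n:ℝ))) 2 P :=
    fun n => ((hZsq n).add ((hZ2 n).const_mul (2 * μ))).sub (memLp_const _)
  have int_g : ∀ n : ℕ,
      Integrable (fun ω => ((Z n ω) ^ 2 + 2 * μ * Z n ω - σ2 * (1 / (n:ℝ))) ^ 2 / σ2 ^ 2) P := by
    intro n
    have h1 := (hh n).smul (φ := fun ω => (Z n ω) ^ 2 + 2 * μ * Z n ω - σ2 * (1 / (n:ℝ)))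
      (hh n) (p := 2) (q := 2) (r := 1) (hpqr := ⟨by rw [ENNReal.inv_two_add_inv_two, inv_one]⟩)
    have heq : ((fun ω => (Z n ω) ^ 2 + 2 * μ * Z n ω - σ2 * (1 / (n:ℝ))) •
        (fun ω => (Z n ω) ^ 2 + 2 * μ * Z n ω - σ2 * (1 / (n:ℝ))))
        = fun ω => ((Z n ω) ^ 2 + 2 * μ * Z n ω - σ2 * (1 / (n:ℝ))) ^ 2 := by
      funext ω; simp [Pi.smul_apply', smul_eq_mul, pow_two]
    rw [heq] at h1
    exact (memLp_one_iff_integrable.mp h1).div_const _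
  have int_bound : ∀ n : ℕ,
      Integrable (fun ω =>
        3 * ((Z n ω) ^ 4 + 4 * μ ^ 2 * (Z n ω) ^ 2 + σ2 ^ 2 * (1 / (n:ℝ)) ^ 2) / σ2 ^ 2) P :=
    fun n => ((((int_Z4 n).add ((int_Z2 n).const_mul (4 * μ ^ 2))).add
      (integrable_const _)).const_mul 3).div_const _
  have hle : ∀ n : ℕ,
      (∫ ω, ((Z n ω) ^ 2 + 2 * μ * Z n ω - σ2 * (1 / n)) ^ 2 / σ2 ^ 2 ∂P)
      ≤ ∫ ω, 3 * ((Z n ω) ^ 4 + 4 * μ ^ 2 * (Z n ω) ^ 2 + σ2 ^ 2 * (1 / (n:ℝ)) ^ 2) / σ2 ^ 2 ∂P := by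
    intro n
    refine integral_mono (int_g n) (int_bound n) fun ω => ?_
    have hσ2' : (0:ℝ) < σ2 ^ 2 := by positivity
    rw [div_le_div_iff_of_pos_right hσ2']
    nlinarith [sq_nonneg ((Z n ω) ^ 2 - 2 * μ * Z n ω),
      sq_nonneg (2 * μ * Z n ω + σ2 * (1 / (n:ℝ))),
      sq_nonneg ((Z n ω) ^ 2 + σ2 * (1 / (n:ℝ)))]
  have hbval : ∀ n : ℕ,
      (∫ ω, 3 * ((Z n ω) ^ 4 + 4 * μ ^ 2 * (Z n ω) ^ 2 + σ2 ^ 2 * (1 / (n:ℝ)) ^ 2) / σ2 ^ 2 ∂P)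
      = 3 * ((∫ ω, (Z n ω) ^ 4 ∂P) + 4 * μ ^ 2 * (∫ ω, (Z n ω) ^ 2 ∂P)
          + σ2 ^ 2 * (1 / (n:ℝ)) ^ 2) / σ2 ^ 2 := by
    intro n
    have i2 : Integrable (fun ω => 4 * μ ^ 2 * Z n ω ^ 2) P := (int_Z2 n).const_mul _
    have i1 : Integrable (fun ω => Z n ω ^ 4 + 4 * μ ^ 2 * Z n ω ^ 2) P := (int_Z4 n).add i2
    rw [integral_div, integral_const_mul, integral_add i1 (integrable_const _),
      integral_add (int_Z4 n) i2, integral_const_mul, integral_const]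
    simp
  have hG : Tendsto (fun n : ℕ =>
      3 * ((∫ ω, (Z n ω) ^ 4 ∂P) + 4 * μ ^ 2 * (∫ ω, (Z n ω) ^ 2 ∂P)
          + σ2 ^ 2 * (1 / (n:ℝ)) ^ 2) / σ2 ^ 2) atTop (nhds 0) := by
    have h0 : Tendsto (fun n : ℕ => (1:ℝ) / n) atTop (nhds 0) :=
      tendsto_one_div_atTop_nhds_zero_nat
    have := ((((hA.add (hB.const_mul (4 * μ ^ 2))).add
      ((h0.pow 2).const_mul (σ2 ^ 2))).const_mul 3).div_const (σ2 ^ 2))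
    simpa using this
  rw [key_eq]
  refine squeeze_zero (fun n => integral_nonneg fun ω => by positivity)
    (fun n => (hle n).trans_eq (hbval n)) hG
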